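/- arXiv:1104.4332 — 9 statements merged into one kernel-verified Lean document; each statement's English description precedes it below -/
import Mathlib

section
/- For every integer p ≥ 1 and positive integer N, S_{2p}(N) = (1/(2p+1))·[ ((N+1)^{2p+1} + N^{2p+1} − 1)/2 − Σ_{q=0}^{p−1} C(2p+1, 2q)·S_{2q}(N) ], where S_k(N) = Σ_{n=1}^N n^k. -/
open Finset

/-- The power sum `S_k(N) = ∑_{n=1}^N n^k`. -/
def powerSum (k N : ℕ) : ℚ := ∑ n ∈ Finset.Icc 1 N, (n : ℚ) ^ k

/-!
Expanding `(n + 1)^(2p+1) - (n - 1)^(2p+1)` by the binomial theorem kills the odd powers of `n`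
and doubles the even ones, so summing over `n = 1, …, N` gives
`2 ∑_{q ≤ p} C(2p+1, 2q) S_{2q}(N)`. The same sum telescopes to `(N+1)^(2p+1) + N^(2p+1) - 1`;
the top term `q = p` has coefficient `C(2p+1, 2p) = 2p+1`, and solving for `S_{2p}(N)` gives the
recursion.
-/

theorem sum_range_two_mul {M : Type*} [AddCommMonoid M] (f : ℕ → M) (p : ℕ) :
    ∑ k ∈ range (2 * p), f k = ∑ q ∈ range p, (f (2 * q) + f (2 * q + 1)) := by
  induction p with
  | zero => simp
  | succ p ih => rw [Nat.mul_succ, sum_range_succ, sum_range_succ, ih, sum_range_succ, add_assoc]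

theorem add_one_pow_sub_sub_one_pow_odd {R : Type*} [CommRing R] (x : R) (p : ℕ) :
    (x + 1) ^ (2 * p + 1) - (x - 1) ^ (2 * p + 1) =
      ∑ q ∈ range (p + 1), 2 * ((2 * p + 1).choose (2 * q) : R) * x ^ (2 * q) := by
  rw [sub_eq_add_neg x, add_pow, add_pow, ← sum_sub_distrib,
    show 2 * p + 1 + 1 = 2 * (p + 1) by ring, sum_range_two_mul]
  refine sum_congr rfl fun q hq => ?_
  have hqp : q ≤ p := Nat.lt_succ_iff.mp (mem_range.mp hq)
  rw [show 2 * p + 1 - 2 * q = 2 * (p - q) + 1 by omega,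
    show 2 * p + 1 - (2 * q + 1) = 2 * (p - q) by omega,
    (Odd.neg_one_pow ⟨p - q, rfl⟩ : (-1 : R) ^ (2 * (p - q) + 1) = -1),
    (Even.neg_one_pow ⟨p - q, two_mul _⟩ : (-1 : R) ^ (2 * (p - q)) = 1)]
  ring

theorem sum_Icc_sub_telescope {R G : Type*} [Ring R] [AddCommGroup G] (f : R → G) (N : ℕ) :
    ∑ n ∈ Icc 1 N, (f ((n : R) + 1) - f ((n : R) - 1)) = f ((N : R) + 1) + f N - f 1 - f 0 := by
  induction N with
  | zero => simp
  | succ N ih =>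
    rw [sum_Icc_succ_top (by omega), ih, Nat.cast_succ, add_sub_cancel_right]
    abel

theorem two_mul_sum_choose_mul_powerSum (p N : ℕ) :
    2 * ∑ q ∈ range (p + 1), ((2 * p + 1).choose (2 * q) : ℚ) * powerSum (2 * q) N =
      ((N : ℚ) + 1) ^ (2 * p + 1) + (N : ℚ) ^ (2 * p + 1) - 1 :=
  calc
    _ = ∑ n ∈ Icc 1 N, (((n : ℚ) + 1) ^ (2 * p + 1) - ((n : ℚ) - 1) ^ (2 * p + 1)) := by
      simp_rw [add_one_pow_sub_sub_one_pow_odd, powerSum, mul_sum]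
      rw [sum_comm]
      simp_rw [mul_assoc]
    _ = _ := by simp [sum_Icc_sub_telescope (fun x : ℚ => x ^ (2 * p + 1))]

theorem powerSum_even_recursion_general (p N : ℕ) :
    powerSum (2 * p) N =
      (1 / (2 * (p : ℚ) + 1)) *
        ((((N : ℚ) + 1) ^ (2 * p + 1) + (N : ℚ) ^ (2 * p + 1) - 1) / 2 -
          ∑ q ∈ Finset.range p, ((2 * p + 1).choose (2 * q) : ℚ) * powerSum (2 * q) N) := by
  have h := two_mul_sum_choose_mul_powerSum p N
  rw [sum_range_succ, Nat.choose_succ_self_right] at h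
  field_simp
  push_cast at h
  linarith

theorem powerSum_even_recursion (p N : ℕ) (hp : 1 ≤ p) (hN : 1 ≤ N) :
    powerSum (2 * p) N =
      (1 / (2 * (p : ℚ) + 1)) *
        ((((N : ℚ) + 1) ^ (2 * p + 1) + (N : ℚ) ^ (2 * p + 1) - 1) / 2 -
          ∑ q ∈ Finset.range p, ((2 * p + 1).choose (2 * q) : ℚ) * powerSum (2 * q) N) :=
  powerSum_even_recursion_general p N
end

section
/- Define rational numbers C_p recursively by C_0 = 1 and Σ_{q=0}^p C_{p−q}/(2q+1)! = 0 for p ≥ 1. Then for all p ≥ 0, Σ_{q=0}^p 2^{2q}·C_{p−q}/(2q+1)! = 1/(2p)!. -/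
/-!
Let `S(x) = ∑ x^q/(2q+1)!` and `Ch(x) = ∑ x^q/(2q)!` be the power series of `sinh √x / √x` and
`cosh √x`. The recursion says exactly that `S · ∑ C_p x^p = 1`, and the claim is the coefficient
identity `S(4x) · ∑ C_p x^p = Ch(x)`. Both follow from `S(4x) = Ch(x) S(x)`, which is
`sinh 2y = 2 sinh y cosh y`; coefficientwise it says that the even-index binomial coefficients
`binom(2q+1, 2k)` sum to `4^q`.
-/

open Finset PowerSeries

theorem Finset.sum_range_two_mul_eq_sum_pairs {M : Type*} [AddCommMonoid M] (f : ℕ → M) (n : ℕ) :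
    ∑ i ∈ range (2 * n), f i = ∑ i ∈ range n, (f (2 * i) + f (2 * i + 1)) := by
  induction n with
  | zero => simp
  | succ n ih => rw [Nat.mul_succ, sum_range_succ, sum_range_succ, sum_range_succ, ih, add_assoc]

theorem Nat.sum_range_choose_two_mul_succ_even (q : ℕ) :
    ∑ k ∈ range (q + 1), (2 * q + 1).choose (2 * k) = 4 ^ q := by
  have even_eq_odd : ∑ k ∈ range (q + 1), (2 * q + 1).choose (2 * k)
      = ∑ k ∈ range (q + 1), (2 * q + 1).choose (2 * k + 1) := by
    rw [← sum_range_reflect]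
    refine sum_congr rfl fun k hk => ?_
    rw [mem_range] at hk
    rw [show 2 * (q + 1 - 1 - k) = 2 * q + 1 - (2 * k + 1) by omega, Nat.choose_symm (by omega)]
  have total := Nat.sum_range_choose (2 * q + 1)
  rw [show 2 * q + 1 + 1 = 2 * (q + 1) by ring, sum_range_two_mul_eq_sum_pairs, sum_add_distrib,
    ← even_eq_odd, pow_succ, show 2 ^ (2 * q) = 4 ^ q by rw [pow_mul]; norm_num] at total
  omega

theorem PowerSeries.coeff_mul_mk_eq_sum_range {R : Type*} [Semiring R] (φ : R⟦X⟧) (f : ℕ → R)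
    (p : ℕ) : coeff p (φ * mk f) = ∑ q ∈ range (p + 1), coeff q φ * f (p - q) := by
  rw [coeff_mul, Nat.sum_antidiagonal_eq_sum_range_succ (fun i j => coeff i φ * coeff j (mk f))]
  simp only [coeff_mk]

section Series

variable (K : Type*) [Field K]

/-- The power series of `sinh √x / √x`. -/
noncomputable def oddFactorialSeries : K⟦X⟧ :=
  mk fun q => ((2 * q + 1).factorial : K)⁻¹

/-- The power series of `cosh √x`. -/
noncomputable def evenFactorialSeries : K⟦X⟧ :=
  mk fun q => ((2 * q).factorial : K)⁻¹

variable {K}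

theorem oddFactorialSeries_mul_mk_eq_one {C : ℕ → K} (hC0 : C 0 = 1)
    (hCrec : ∀ p, 1 ≤ p → ∑ q ∈ range (p + 1), C (p - q) / ((2 * q + 1).factorial : K) = 0) :
    oddFactorialSeries K * mk C = 1 := by
  ext p
  rw [coeff_mul_mk_eq_sum_range, coeff_one]
  rcases Nat.eq_zero_or_pos p with rfl | hp
  · simp [oddFactorialSeries, hC0]
  · rw [if_neg hp.ne', ← hCrec p hp]
    simp only [oddFactorialSeries, coeff_mk, div_eq_inv_mul]

variable [CharZero K]

theorem inv_factorial_mul_inv_factorial_eq_choose_div {q k : ℕ} (hk : k ≤ q) :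
    ((2 * k).factorial : K)⁻¹ * ((2 * (q - k) + 1).factorial : K)⁻¹
      = (2 * q + 1).choose (2 * k) / (2 * q + 1).factorial := by
  have h := Nat.choose_mul_factorial_mul_factorial (show 2 * k ≤ 2 * q + 1 by omega)
  rw [show 2 * q + 1 - 2 * k = 2 * (q - k) + 1 by omega] at h
  have hchoose : ((2 * q + 1).choose (2 * k) : K) ≠ 0 :=
    Nat.cast_ne_zero.mpr (Nat.choose_pos (by omega)).ne'
  rw [← h]
  push_cast
  field_simp

theorem rescale_four_oddFactorialSeries :
    rescale 4 (oddFactorialSeries K) = evenFactorialSeries K * oddFactorialSeries K := by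
  ext q
  rw [oddFactorialSeries, coeff_rescale, coeff_mk, coeff_mul_mk_eq_sum_range]
  calc (4 : K) ^ q * ((2 * q + 1).factorial : K)⁻¹
      = (∑ k ∈ range (q + 1), (2 * q + 1).choose (2 * k) : ℕ) / (2 * q + 1).factorial := by
        rw [Nat.sum_range_choose_two_mul_succ_even]; push_cast; ring
    _ = _ := by
        rw [Nat.cast_sum, sum_div]
        refine sum_congr rfl fun k hk => ?_
        rw [evenFactorialSeries, coeff_mk,
          inv_factorial_mul_inv_factorial_eq_choose_div (Nat.lt_succ_iff.mp (mem_range.mp hk))]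

end Series

theorem C_recursion_b (C : ℕ → ℚ) (hC0 : C 0 = 1)
    (hCrec : ∀ p : ℕ, 1 ≤ p → ∑ q ∈ Finset.range (p + 1), C (p - q) / (Nat.factorial (2 * q + 1) : ℚ) = 0) (p : ℕ) :
    ∑ q ∈ Finset.range (p + 1), 2 ^ (2 * q) * C (p - q) / (Nat.factorial (2 * q + 1) : ℚ) =
      1 / (Nat.factorial (2 * p) : ℚ) := by
  have series_identity : rescale 4 (oddFactorialSeries ℚ) * mk C = evenFactorialSeries ℚ := by
    rw [rescale_four_oddFactorialSeries, mul_assoc, oddFactorialSeries_mul_mk_eq_one hC0 hCrec,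
      mul_one]
  have h := congrArg (coeff p) series_identity
  rw [coeff_mul_mk_eq_sum_range, evenFactorialSeries, coeff_mk] at h
  rw [one_div, ← h]
  refine sum_congr rfl fun q _ => ?_
  rw [coeff_rescale, oddFactorialSeries, coeff_mk, pow_mul]
  ring
end

section
/- Define rational numbers C_p by C_0 = 1 and Σ_{q=0}^p C_{p−q}/(2q+1)! = 0 for p ≥ 1. Then for all p ≥ 1, Σ_{q=0}^p C_{p−q}/(2q)! = C_p/(2^{1−2p} − 1). -/
/-!
The recursion says that `∑ C_p x^{2p} = x / sinh x`. Multiplying by `cosh x` gives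
`∑ a_p x^{2p} = x coth x`, where `a_p` is the left-hand side of the claim. The identity
`coth (x/2) - coth x = 1 / sinh x` reads `x / sinh x = 2 · (x/2) coth (x/2) - x coth x`, and comparing
coefficients of `x^{2p}` gives `C_p = (2^{1-2p} - 1) a_p`. We work with power series in `t = x²`,
where `x ↦ 2x` becomes `rescale 4`, and derive the two double-angle formulas from
`exp (2x) = (exp x)²` by passing to `x` with `expand 2`.
-/

open Finset PowerSeries

namespace PowerSeries

instance {R : Type*} [CommSemiring R] [CharZero R] : CharZero R⟦X⟧ :=
  charZero_of_injective_ringHom C_injective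

theorem expand_injective {R : Type*} [CommRing R] (p : ℕ) (hp : p ≠ 0) :
    Function.Injective (expand p hp : R⟦X⟧ →ₐ[R] R⟦X⟧) := by
  intro f g h
  ext n
  simpa using congrArg (coeff (p * n)) h

theorem coeff_mul_mk {R : Type*} [CommSemiring R] (f : R⟦X⟧) (g : ℕ → R) (n : ℕ) :
    coeff n (f * mk g) = ∑ q ∈ range (n + 1), coeff (n - q) f * g q := by
  rw [mul_comm, coeff_mul,
    Nat.sum_antidiagonal_eq_sum_range_succ (fun i j ↦ coeff i (mk g) * coeff j f)]
  simp only [coeff_mk, mul_comm]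

/-- `evenExp (x²) = cosh x`. -/
noncomputable def evenExp : ℚ⟦X⟧ := mk fun n ↦ ((2 * n).factorial : ℚ)⁻¹

/-- `x · oddExp (x²) = sinh x`. -/
noncomputable def oddExp : ℚ⟦X⟧ := mk fun n ↦ ((2 * n + 1).factorial : ℚ)⁻¹

theorem two_mul_expand_rescale_evenExp (a : ℚ) :
    2 * expand 2 two_ne_zero (rescale (a ^ 2) evenExp) =
      rescale a (exp ℚ) + rescale (-a) (exp ℚ) := by
  ext n
  rw [← map_ofNat C 2, coeff_C_mul]
  obtain ⟨k, rfl | rfl⟩ := Nat.even_or_odd' n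
  · simp [evenExp, coeff_exp, ← pow_mul, Even.neg_pow (even_two_mul k)]
    ring
  · simp [coeff_expand_of_not_dvd, coeff_exp, Odd.neg_pow (odd_two_mul_add_one k)]

theorem two_mul_X_mul_expand_rescale_oddExp (a : ℚ) :
    2 * (C a * X * expand 2 two_ne_zero (rescale (a ^ 2) oddExp)) =
      rescale a (exp ℚ) - rescale (-a) (exp ℚ) := by
  ext n
  rw [← map_ofNat C 2, coeff_C_mul, mul_comm (C a), mul_assoc]
  rcases n with _ | n
  · simp [- coeff_zero_eq_constantCoeff, coeff_zero_X_mul, coeff_exp]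
  rw [coeff_succ_X_mul, coeff_C_mul]
  obtain ⟨k, rfl | rfl⟩ := Nat.even_or_odd' n
  · simp [oddExp, coeff_exp, ← pow_mul, Odd.neg_pow (odd_two_mul_add_one k)]
    ring
  · simp [coeff_expand_of_not_dvd, coeff_exp,
      Even.neg_pow (⟨k + 1, by ring⟩ : Even (2 * k + 1 + 1))]

theorem rescale_four_evenExp : rescale 4 evenExp = 2 * evenExp ^ 2 - 1 := by
  apply expand_injective 2 two_ne_zero
  apply mul_left_cancel₀ (two_ne_zero' ℚ⟦X⟧)
  have h1 := two_mul_expand_rescale_evenExp 1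
  have h2 := two_mul_expand_rescale_evenExp 2
  have e2 := exp_mul_exp_eq_exp_add (1 : ℚ) 1
  have em2 := exp_mul_exp_eq_exp_add (-1 : ℚ) (-1)
  have e0 := exp_mul_exp_eq_exp_add (1 : ℚ) (-1)
  norm_num at h1 h2 e2 em2 e0
  simp only [map_sub, map_mul, map_pow, map_one, map_ofNat]
  linear_combination h2 - e2 - em2 - 2 * e0 -
    (2 * expand 2 two_ne_zero evenExp + exp ℚ + rescale (-1) (exp ℚ)) * h1

theorem rescale_four_oddExp : rescale 4 oddExp = oddExp * evenExp := by
  apply expand_injective 2 two_ne_zero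
  apply mul_left_cancel₀ (mul_ne_zero (by norm_num : (4 : ℚ⟦X⟧) ≠ 0) X_ne_zero)
  have h1 := two_mul_expand_rescale_evenExp 1
  have g1 := two_mul_X_mul_expand_rescale_oddExp 1
  have g2 := two_mul_X_mul_expand_rescale_oddExp 2
  have e2 := exp_mul_exp_eq_exp_add (1 : ℚ) 1
  have em2 := exp_mul_exp_eq_exp_add (-1 : ℚ) (-1)
  norm_num at h1 g1 g2 e2 em2
  rw [map_ofNat C 2] at g2
  simp only [map_mul]
  linear_combination g2 - e2 + em2 - 2 * expand 2 two_ne_zero evenExp * g1 -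
    (exp ℚ - rescale (-1) (exp ℚ)) * h1

/-- In terms of `x² = t`: `2x coth x - 2x coth 2x = 2x / sinh 2x`. -/
theorem two_mul_sub_rescale_four {c : ℚ⟦X⟧} (hc : c * oddExp = 1) :
    2 * (c * evenExp) - rescale 4 (c * evenExp) = rescale 4 c := by
  have hr : rescale 4 c * (oddExp * evenExp) = 1 := by
    rw [← rescale_four_oddExp, ← map_mul, hc, map_one]
  have hce : rescale 4 c * evenExp = c := by
    linear_combination c * hr - (rescale 4 c * evenExp) * hc
  rw [map_mul, rescale_four_evenExp]
  linear_combination (-2 * evenExp) * hce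

theorem two_sub_four_pow_mul_coeff {c : ℚ⟦X⟧} (hc : c * oddExp = 1) (p : ℕ) :
    (2 - 4 ^ p) * coeff p (c * evenExp) = 4 ^ p * coeff p c := by
  have h := congrArg (coeff p) (two_mul_sub_rescale_four hc)
  rw [map_sub, ← map_ofNat C 2, coeff_C_mul, coeff_rescale, coeff_rescale] at h
  linear_combination h

end PowerSeries

theorem mk_mul_oddExp_eq_one (C : ℕ → ℚ) (hC0 : C 0 = 1)
    (hCrec : ∀ p : ℕ, 1 ≤ p → ∑ q ∈ range (p + 1), C (p - q) / ((2 * q + 1).factorial : ℚ) = 0) :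
    mk C * oddExp = 1 := by
  ext p
  rw [oddExp, coeff_mul_mk, coeff_one]
  rcases Nat.eq_zero_or_pos p with rfl | hp
  · simp [hC0]
  · simp only [coeff_mk, ← div_eq_mul_inv, hCrec p hp, if_neg hp.ne']

theorem C_recursion_g_general (C : ℕ → ℚ) (hC0 : C 0 = 1)
    (hCrec : ∀ p : ℕ, 1 ≤ p → ∑ q ∈ Finset.range (p + 1), C (p - q) / (Nat.factorial (2 * q + 1) : ℚ) = 0) (p : ℕ) :
    ∑ q ∈ Finset.range (p + 1), C (p - q) / (Nat.factorial (2 * q) : ℚ) =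
      C p / ((2 : ℚ) ^ (1 - 2 * (p : ℤ)) - 1) := by
  have hsum : ∑ q ∈ range (p + 1), C (p - q) / ((2 * q).factorial : ℚ) =
      coeff p (mk C * evenExp) := by
    simp only [evenExp, coeff_mul_mk, coeff_mk, div_eq_mul_inv]
  have hcoeff := two_sub_four_pow_mul_coeff (mk_mul_oddExp_eq_one C hC0 hCrec) p
  rw [coeff_mk] at hcoeff
  have hzpow : (2 : ℚ) ^ (1 - 2 * (p : ℤ)) * 4 ^ p = 2 := by
    rw [show (4 : ℚ) ^ p = 2 ^ (2 * (p : ℤ)) by norm_num [zpow_mul, pow_mul],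
      ← zpow_add₀ two_ne_zero]
    norm_num
  have hne : (2 : ℚ) ^ (1 - 2 * (p : ℤ)) - 1 ≠ 0 := by
    rw [sub_ne_zero, Ne, zpow_eq_one_iff_right₀ zero_le_two (by norm_num)]
    omega
  rw [hsum, eq_div_iff hne]
  apply mul_right_cancel₀ (pow_ne_zero p (four_ne_zero : (4 : ℚ) ≠ 0))
  linear_combination hcoeff + coeff p (mk C * evenExp) * hzpow

theorem C_recursion_g (C : ℕ → ℚ) (hC0 : C 0 = 1)
    (hCrec : ∀ p : ℕ, 1 ≤ p → ∑ q ∈ Finset.range (p + 1), C (p - q) / (Nat.factorial (2 * q + 1) : ℚ) = 0) (p : ℕ) (hp : 1 ≤ p) :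
    ∑ q ∈ Finset.range (p + 1), C (p - q) / (Nat.factorial (2 * q) : ℚ) =
      C p / ((2 : ℚ) ^ (1 - 2 * (p : ℤ)) - 1) :=
  C_recursion_g_general C hC0 hCrec p
end

section
/- Define rational numbers C_p by C_0 = 1 and Σ_{q=0}^p C_{p−q}/(2q+1)! = 0 for p ≥ 1. Then for all p ≥ 0, C_p = (2 − 2^{2p})·B_{2p}/(2p)!, where B_n denotes the n-th Bernoulli number. -/
/-!
Since `x / (e^x - 1) = ∑ Bₙ xⁿ / n!`, the series `2 B(x) - B(2x)` equals `x / sinh x`, whose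
coefficient of `x^{2p}` is `(2 - 2^{2p}) B_{2p} / (2p)!`. The recursion says exactly that
`∑ C_p x^{2p}` is the inverse of `sinh x / x = ∑ x^{2q} / (2q+1)!`, so it is `x / sinh x`.
Even series are written as series in `x²` (hence the `Sqrt` in the names) and compared through
`PowerSeries.expand 2`.
-/

open Finset PowerSeries

theorem PowerSeries.mk_mul_mk_eq_one {R : Type*} [CommRing R] {c a : ℕ → R}
    (h₀ : c 0 * a 0 = 1) (h : ∀ p, 1 ≤ p → ∑ q ∈ range (p + 1), c (p - q) * a q = 0) :
    mk c * mk a = 1 := by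
  ext p
  rw [mul_comm, coeff_mul, Nat.sum_antidiagonal_eq_sum_range_succ_mk, coeff_one]
  rcases Nat.eq_zero_or_pos p with rfl | hp
  · simpa [mul_comm] using h₀
  · simpa [hp.ne', mul_comm] using h p hp

theorem PowerSeries.expand_injective_s8 {R : Type*} [CommRing R] (p : ℕ) (hp : p ≠ 0) :
    Function.Injective (expand p hp (R := R)) := fun f g h => by
  ext n
  simpa using congrArg (coeff (p * n)) h

theorem two_mul_bernoulliPowerSeries_sub_rescale_mul_exp_sub_exp_neg (A : Type*) [CommRing A]
    [Algebra ℚ A] :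
    (2 * bernoulliPowerSeries A - rescale 2 (bernoulliPowerSeries A)) *
      (exp A - rescale (-1) (exp A)) = 2 * X := by
  set B := bernoulliPowerSeries A
  set E := exp A
  set F := rescale (-1 : A) E
  have hB : B * (E - 1) = X := bernoulliPowerSeries_mul_exp_sub_one A
  have hB₂ : rescale 2 B * (E ^ 2 - 1) = 2 * X := by
    have hE₂ : E ^ 2 = rescale 2 E := by exact_mod_cast exp_pow_eq_rescale_exp (A := A) 2
    rw [hE₂, ← map_one (rescale (2 : A)), ← map_sub, ← map_mul, hB, rescale_X, map_ofNat]
  have hEF : E * F = 1 := exp_mul_exp_neg_eq_one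
  -- times `E`, the left side is `(2 B - B(2X)) (E² - 1) = 2 X (E + 1) - 2 X = 2 X E`
  linear_combination F * (2 * (E + 1) * hB - hB₂ - (2 * B - rescale 2 B) * hEF)
    - ((2 * B - rescale 2 B) * (E - F) - 2 * X) * hEF

def sinhSqrtDivSqrt : ℚ⟦X⟧ := mk fun q => ((2 * q + 1).factorial : ℚ)⁻¹

def sqrtDivSinhSqrt : ℚ⟦X⟧ :=
  mk fun p => (2 - 2 ^ (2 * p)) * bernoulli (2 * p) / (2 * p).factorial

theorem two_mul_X_mul_expand_sinhSqrtDivSqrt :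
    2 * X * expand 2 two_ne_zero sinhSqrtDivSqrt = exp ℚ - rescale (-1) (exp ℚ) := by
  ext n
  rw [mul_assoc, ← map_ofNat C, coeff_C_mul, map_sub, coeff_rescale]
  rcases n with _ | n
  · simp
  · rw [coeff_succ_X_mul]
    simp only [coeff_expand, sinhSqrtDivSqrt, coeff_mk, coeff_exp]
    rcases Nat.even_or_odd n with ⟨m, rfl⟩ | ⟨m, rfl⟩
    · simp [← two_mul, pow_succ]
    · simp [Nat.not_two_dvd_bit1, pow_succ]

theorem expand_sqrtDivSinhSqrt :
    expand 2 two_ne_zero sqrtDivSinhSqrt =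
      2 * bernoulliPowerSeries ℚ - rescale 2 (bernoulliPowerSeries ℚ) := by
  ext n
  rw [coeff_expand, map_sub, ← map_ofNat C, coeff_C_mul, coeff_rescale]
  simp only [sqrtDivSinhSqrt, bernoulliPowerSeries, coeff_mk, Algebra.algebraMap_self,
    RingHom.id_apply]
  split_ifs with h
  · obtain ⟨m, rfl⟩ := h
    rw [Nat.mul_div_cancel_left _ two_pos]
    ring
  · rcases eq_or_ne n 1 with rfl | h1
    · norm_num
    · rw [bernoulli_eq_zero_of_odd (Nat.odd_iff.mpr (by omega)) (by omega)]
      simp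

theorem sqrtDivSinhSqrt_mul_sinhSqrtDivSqrt : sqrtDivSinhSqrt * sinhSqrtDivSqrt = 1 := by
  apply expand_injective_s8 2 two_ne_zero
  have h2 : (2 : ℚ⟦X⟧) ≠ 0 := by
    rw [← map_ofNat C, Ne, map_eq_zero_iff _ C_injective]
    norm_num
  apply mul_left_cancel₀ (mul_ne_zero h2 X_ne_zero)
  rw [map_mul, map_one, expand_sqrtDivSinhSqrt, mul_one, mul_left_comm,
    two_mul_X_mul_expand_sinhSqrtDivSqrt,
    two_mul_bernoulliPowerSeries_sub_rescale_mul_exp_sub_exp_neg]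

theorem C_eq_bernoulli (C : ℕ → ℚ) (hC0 : C 0 = 1)
    (hCrec : ∀ p : ℕ, 1 ≤ p → ∑ q ∈ Finset.range (p + 1), C (p - q) / (Nat.factorial (2 * q + 1) : ℚ) = 0) (p : ℕ) :
    C p = (2 - 2 ^ (2 * p)) * bernoulli (2 * p) / (Nat.factorial (2 * p) : ℚ) := by
  have hC : mk C * sinhSqrtDivSqrt = 1 :=
    mk_mul_mk_eq_one (by simp [hC0]) fun p hp => by simpa only [div_eq_mul_inv] using hCrec p hp
  have hCD : mk C = sqrtDivSinhSqrt :=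
    mul_right_cancel₀ (right_ne_zero_of_mul_eq_one hC)
      (hC.trans sqrtDivSinhSqrt_mul_sinhSqrtDivSqrt.symm)
  simpa [sqrtDivSinhSqrt] using congrArg (coeff p) hCD
end

section
/- Define rational numbers C_p by C_0 = 1 and Σ_{q=0}^p C_{p−q}/(2q+1)! = 0 for p ≥ 1. Then for every integer k ≥ 0 and every positive integer N, S_k(N) = (k!/2^{k+1})·Σ_{q=0}^{⌊k/2⌋} C_q·((2N+1)^{k+1−2q} − 1)/(k+1−2q)!, where S_k(N) = Σ_{n=1}^N n^k. -/
/-!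
Telescoping `(2n+1)^m - (2n-1)^m` over `n = 1, …, N` and expanding binomially, only the odd
powers of the `± 1` survive, so `((2N+1)^m - 1)/m!` is a combination of the normalised power sums
`A_j = 2^(j+1) S_j(N)/j!` with weights `1/r!`, `r` odd. Substituting this into the right-hand side
turns it into a double sum whose coefficients are those of the product of the generating series
`∑ C_p x^p` and `∑ x^p/(2p+1)!`; the recursion says that this product is `1`, so only `A_k` is left.
-/

open Finset

open Nat

theorem Finset.sum_range_sum_range_sub_eq_sum_antidiagonal {M : Type*} [AddCommMonoid M]
    (f : ℕ → ℕ → M) (K : ℕ) :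
    ∑ q ∈ range (K + 1), ∑ s ∈ range (K + 1 - q), f q s =
      ∑ p ∈ range (K + 1), ∑ x ∈ antidiagonal p, f x.1 x.2 := by
  rw [sum_sigma', sum_sigma']
  refine sum_nbij' (fun x => ⟨x.1 + x.2, (x.1, x.2)⟩) (fun x => ⟨x.2.1, x.2.2⟩)
    ?_ ?_ ?_ ?_ ?_ <;> rintro ⟨_, _⟩ <;> simp <;> omega

section CommRing

variable {R : Type*} [CommRing R]

theorem sum_range_mul_one_sub_neg_one_pow (g : ℕ → R) (n : ℕ) :
    ∑ r ∈ range n, g r * (1 - (-1) ^ r) = 2 * ∑ s ∈ range (n / 2), g (2 * s + 1) := by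
  induction n using Nat.twoStepInduction with
  | zero => simp
  | one => simp
  | more n ih _ =>
    rw [sum_range_succ, sum_range_succ, ih, show (n + 2) / 2 = n / 2 + 1 by omega,
      sum_range_succ, mul_add]
    rcases Nat.even_or_odd' n with ⟨j, rfl | rfl⟩
    · rw [(even_two_mul j).neg_one_pow, (odd_two_mul_add_one j).neg_one_pow,
        Nat.mul_div_cancel_left j two_pos]
      ring
    · rw [(odd_two_mul_add_one j).neg_one_pow, (odd_two_mul_add_one j).add_one.neg_one_pow,
        show (2 * j + 1) / 2 = j by omega]
      ring

theorem add_pow_sub_sub_pow (x y : R) (m : ℕ) :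
    (x + y) ^ m - (x - y) ^ m =
      2 * ∑ s ∈ range ((m + 1) / 2),
        x ^ (m - (2 * s + 1)) * y ^ (2 * s + 1) * m.choose (2 * s + 1) := by
  rw [← sum_range_mul_one_sub_neg_one_pow (fun r => x ^ (m - r) * y ^ r * m.choose r),
    add_comm x y, sub_eq_neg_add x y, add_pow, add_pow, ← sum_sub_distrib]
  refine sum_congr rfl fun r _ => ?_
  rw [neg_pow]
  ring

theorem sum_Icc_two_mul_add_one_pow_sub (m N : ℕ) :
    ∑ n ∈ Icc 1 N, ((2 * n + 1 : R) ^ m - (2 * n - 1) ^ m) = (2 * N + 1) ^ m - 1 := by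
  let f : ℕ → R := fun n => (2 * n - 1) ^ m
  calc ∑ n ∈ Icc 1 N, ((2 * n + 1 : R) ^ m - (2 * n - 1) ^ m)
      = ∑ n ∈ Ico 1 (N + 1), (f (n + 1) - f n) := by
        rw [Ico_add_one_right_eq_Icc]; push_cast [f]; ring_nf
    _ = f (N + 1) - f 1 := sum_Ico_sub f (by omega)
    _ = (2 * N + 1) ^ m - 1 := by push_cast [f]; ring_nf

end CommRing

namespace PowerSeries

variable {R : Type*} [CommSemiring R] {c a : ℕ → R}

theorem mk_mul_mk_eq_one_s10 (h0 : c 0 * a 0 = 1)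
    (hrec : ∀ p, 1 ≤ p → ∑ q ∈ range (p + 1), c (p - q) * a q = 0) : mk c * mk a = 1 := by
  ext p
  simp only [coeff_mul, coeff_mk]
  rw [Nat.sum_antidiagonal_eq_sum_range_succ (fun i j => c i * a j), ← sum_range_reflect]
  rcases Nat.eq_zero_or_pos p with rfl | hp
  · simpa using h0
  · rw [coeff_one, if_neg hp.ne', ← hrec p hp]
    refine sum_congr rfl fun q hq => ?_
    rw [Nat.succ_sub_one, Nat.sub_sub_self (Nat.lt_succ_iff.mp (mem_range.mp hq))]

theorem sum_mul_sum_range_sub_eq_of_mk_mul_mk_eq_one (h : mk c * mk a = 1) (b : ℕ → R) (K : ℕ) :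
    ∑ q ∈ range (K + 1), c q * ∑ s ∈ range (K + 1 - q), a s * b (q + s) = b 0 := by
  simp_rw [mul_sum, ← mul_assoc]
  rw [sum_range_sum_range_sub_eq_sum_antidiagonal]
  calc ∑ p ∈ range (K + 1), ∑ x ∈ antidiagonal p, c x.1 * a x.2 * b (x.1 + x.2)
      = ∑ p ∈ range (K + 1), coeff p (mk c * mk a) * b p := by
        refine sum_congr rfl fun p _ => ?_
        rw [coeff_mul, sum_mul]
        exact sum_congr rfl fun x hx => by rw [mem_antidiagonal.mp hx, coeff_mk, coeff_mk]
    _ = b 0 := by simp [h, coeff_one]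

end PowerSeries

def scaledPowerSum (k N : ℕ) : ℚ := 2 ^ (k + 1) * powerSum k N / k !

theorem two_mul_add_one_pow_sub_one_div_factorial (m N : ℕ) :
    ((2 * N + 1 : ℚ) ^ m - 1) / m ! =
      ∑ s ∈ range ((m + 1) / 2), scaledPowerSum (m - (2 * s + 1)) N / (2 * s + 1)! := by
  rw [← sum_Icc_two_mul_add_one_pow_sub]
  simp only [add_pow_sub_sub_pow, one_pow, mul_one, mul_pow]
  rw [← mul_sum, sum_comm, mul_sum, sum_div]
  refine sum_congr rfl fun s hs => ?_
  have hr : 2 * s + 1 ≤ m := by rw [mem_range] at hs; omega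
  rw [scaledPowerSum, powerSum, Nat.cast_choose ℚ hr, ← sum_mul, ← mul_sum]
  field_simp
  ring

theorem powerSum_eq_C_expansion_general (C : ℕ → ℚ) (hC0 : C 0 = 1)
    (hCrec : ∀ p : ℕ, 1 ≤ p → ∑ q ∈ Finset.range (p + 1), C (p - q) / (Nat.factorial (2 * q + 1) : ℚ) = 0) (k N : ℕ) :
    powerSum k N =
      ((Nat.factorial k : ℚ) / 2 ^ (k + 1)) *
        ∑ q ∈ Finset.range (k / 2 + 1),
          C q * ((2 * (N : ℚ) + 1) ^ (k + 1 - 2 * q) - 1) /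
            (Nat.factorial (k + 1 - 2 * q) : ℚ) := by
  have hexpand : ∀ q ∈ range (k / 2 + 1),
      C q * ((2 * (N : ℚ) + 1) ^ (k + 1 - 2 * q) - 1) / (k + 1 - 2 * q)! =
        C q * ∑ s ∈ range (k / 2 + 1 - q),
          ((2 * s + 1)! : ℚ)⁻¹ * scaledPowerSum (k - 2 * (q + s)) N := by
    intro q hq
    rw [mem_range] at hq
    rw [mul_div_assoc, two_mul_add_one_pow_sub_one_div_factorial,
      show (k + 1 - 2 * q + 1) / 2 = k / 2 + 1 - q by omega]
    refine congrArg _ (sum_congr rfl fun s hs => ?_)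
    rw [mem_range] at hs
    rw [inv_mul_eq_div, show k + 1 - 2 * q - (2 * s + 1) = k - 2 * (q + s) by omega]
  have hinverse : PowerSeries.mk C * PowerSeries.mk (fun q => ((2 * q + 1)! : ℚ)⁻¹) = 1 :=
    PowerSeries.mk_mul_mk_eq_one_s10 (by simp [hC0]) (by simpa only [div_eq_mul_inv] using hCrec)
  rw [sum_congr rfl hexpand, PowerSeries.sum_mul_sum_range_sub_eq_of_mk_mul_mk_eq_one hinverse
    (fun p => scaledPowerSum (k - 2 * p) N), Nat.mul_zero, Nat.sub_zero, scaledPowerSum]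
  field_simp

theorem powerSum_eq_C_expansion (C : ℕ → ℚ) (hC0 : C 0 = 1)
    (hCrec : ∀ p : ℕ, 1 ≤ p → ∑ q ∈ Finset.range (p + 1), C (p - q) / (Nat.factorial (2 * q + 1) : ℚ) = 0) (k N : ℕ) (hN : 1 ≤ N) :
    powerSum k N =
      ((Nat.factorial k : ℚ) / 2 ^ (k + 1)) *
        ∑ q ∈ Finset.range (k / 2 + 1),
          C q * ((2 * (N : ℚ) + 1) ^ (k + 1 - 2 * q) - 1) /
            (Nat.factorial (k + 1 - 2 * q) : ℚ) :=
  powerSum_eq_C_expansion_general C hC0 hCrec k N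
end

section
/- Define rational numbers C_p by C_0 = 1 and Σ_{q=0}^p C_{p−q}/(2q+1)! = 0 for p ≥ 1. For every odd positive integer N and every integer k ≥ 0, the power sum of odd integers S̄_k(N) = 1 + 3^k + 5^k + ⋯ + N^k satisfies S̄_k(N) = (k!/2)·Σ_{q=0}^{⌊k/2⌋} C_q·(N+1)^{k+1−2q}/(k+1−2q)!. -/
/-!
Put `F_k(y) = ∑_q C_q y^(k+1-2q) / (k+1-2q)!` (`cExpansion C k y`). The central difference
of `y^n / n!` is `∑_r 2 / (2r+1)! · y^(n-2r-1) / (n-2r-1)!`, and the recurrence says that `C`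
convolved with `1 / (2r+1)!` is the unit sequence (`∑ C_p x^(2p) = x / sinh x`), so
`F_k(y+1) - F_k(y-1) = 2 y^k / k!`. Summing over `y = 1, 3, …, N` telescopes to
`F_k(N+1) - F_k(0)`, and `F_k(0) = 0` since every exponent is positive.
-/

open Finset

/-- The power sum of odd integers `S̄_k(N) = 1 + 3^k + ⋯ + N^k` for odd `N = 2m+1`. -/
def oddPowerSum (k m : ℕ) : ℚ := ∑ j ∈ Finset.range (m + 1), (2 * (j : ℚ) + 1) ^ k

open Nat

theorem sum_range_eq_sum_odd {M : Type*} [AddCommMonoid M] (f : ℕ → M)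
    (hf : ∀ r, f (2 * r) = 0) (n : ℕ) :
    ∑ i ∈ range n, f i = ∑ r ∈ range (n / 2), f (2 * r + 1) := by
  induction n with
  | zero => simp
  | succ n ih =>
    rw [sum_range_succ, ih]
    rcases Nat.even_or_odd' n with ⟨r, rfl | rfl⟩
    · rw [hf, add_zero, show (2 * r + 1) / 2 = 2 * r / 2 by omega]
    · rw [show (2 * r + 1 + 1) / 2 = (2 * r + 1) / 2 + 1 by omega, sum_range_succ,
        show (2 * r + 1) / 2 = r by omega]

section Binomial

variable {K : Type*} [Field K] [CharZero K]

theorem add_pow_div_factorial (x a : K) (n : ℕ) :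
    (x + a) ^ n / n ! = ∑ i ∈ range (n + 1), a ^ i / i ! * (x ^ (n - i) / (n - i)!) := by
  rw [add_comm, add_pow, sum_div]
  refine sum_congr rfl fun i hi => ?_
  have : (n ! : K) ≠ 0 := Nat.cast_ne_zero.mpr n.factorial_ne_zero
  rw [Nat.cast_choose K (Nat.lt_succ_iff.mp (mem_range.mp hi))]
  field_simp

theorem add_one_pow_sub_sub_one_pow_div_factorial (x : K) (n : ℕ) :
    ((x + 1) ^ n - (x - 1) ^ n) / n ! =
      ∑ r ∈ range ((n + 1) / 2),
        2 / (2 * r + 1)! * (x ^ (n - (2 * r + 1)) / (n - (2 * r + 1))!) := by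
  rw [sub_div, sub_eq_add_neg x, add_pow_div_factorial, add_pow_div_factorial,
    ← sum_sub_distrib, sum_range_eq_sum_odd]
  · refine sum_congr rfl fun r _ => ?_
    rw [one_pow, Odd.neg_one_pow ⟨r, rfl⟩]
    ring
  · intro r
    rw [one_pow, Even.neg_one_pow ⟨r, two_mul r⟩, sub_self]

end Binomial

section Expansion

variable {K : Type*} [Field K] {C : ℕ → K}

variable (C) in
def cExpansion (k : ℕ) (y : K) : K :=
  ∑ q ∈ range (k / 2 + 1), C q * y ^ (k + 1 - 2 * q) / (k + 1 - 2 * q)!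

variable (C) in
theorem cExpansion_zero (k : ℕ) : cExpansion C k 0 = 0 :=
  sum_eq_zero fun q hq => by
    rw [zero_pow (by have := mem_range.mp hq; omega), mul_zero, zero_div]

theorem sum_range_div_factorial_eq_ite (hC0 : C 0 = 1)
    (hCrec : ∀ p : ℕ, 1 ≤ p → ∑ q ∈ range (p + 1), C (p - q) / ((2 * q + 1)! : K) = 0) (p : ℕ) :
    ∑ q ∈ range (p + 1), C q / ((2 * (p - q) + 1)! : K) = if p = 0 then 1 else 0 := by
  split_ifs with hp
  · simp [hp, hC0]
  · rw [← hCrec p (by omega), ← sum_range_reflect]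
    refine sum_congr rfl fun q hq => ?_
    rw [show p - (p + 1 - 1 - q) = q by have := mem_range.mp hq; omega, add_tsub_cancel_right]

theorem cExpansion_add_one_sub_cExpansion_sub_one [CharZero K]
    (hC : ∀ p, ∑ q ∈ range (p + 1), C q / ((2 * (p - q) + 1)! : K) = if p = 0 then 1 else 0)
    (k : ℕ) (y : K) :
    cExpansion C k (y + 1) - cExpansion C k (y - 1) = 2 * (y ^ k / k !) := by
  have hterm : ∀ q ∈ range (k / 2 + 1),
      C q * (y + 1) ^ (k + 1 - 2 * q) / (k + 1 - 2 * q)! -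
          C q * (y - 1) ^ (k + 1 - 2 * q) / (k + 1 - 2 * q)! =
        ∑ r ∈ range (k / 2 + 1 - q),
          C q * (2 / (2 * r + 1)! * (y ^ (k - 2 * (q + r)) / (k - 2 * (q + r))!)) := by
    intro q hq
    have hq := mem_range.mp hq
    rw [mul_div_assoc, mul_div_assoc, ← mul_sub, ← sub_div,
      add_one_pow_sub_sub_one_pow_div_factorial, mul_sum,
      show (k + 1 - 2 * q + 1) / 2 = k / 2 + 1 - q by omega]
    refine sum_congr rfl fun r hr => ?_
    rw [show k + 1 - 2 * q - (2 * r + 1) = k - 2 * (q + r) by have := mem_range.mp hr; omega]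
  calc cExpansion C k (y + 1) - cExpansion C k (y - 1)
      = ∑ q ∈ range (k / 2 + 1), ∑ r ∈ range (k / 2 + 1 - q),
          C q * (2 / (2 * r + 1)! * (y ^ (k - 2 * (q + r)) / (k - 2 * (q + r))!)) := by
        rw [cExpansion, cExpansion, ← sum_sub_distrib]
        exact sum_congr rfl hterm
    _ = ∑ s ∈ range (k / 2 + 1), ∑ q ∈ range (s + 1),
          C q * (2 / (2 * (s - q) + 1)! *
            (y ^ (k - 2 * (q + (s - q))) / (k - 2 * (q + (s - q)))!)) :=
        (sum_range_diag_flip _ _).symm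
    _ = ∑ s ∈ range (k / 2 + 1), 2 * (y ^ (k - 2 * s) / (k - 2 * s)!) *
          ∑ q ∈ range (s + 1), C q / ((2 * (s - q) + 1)! : K) := by
        refine sum_congr rfl fun s _ => ?_
        rw [mul_sum]
        refine sum_congr rfl fun q hq => ?_
        rw [show q + (s - q) = s by have := mem_range.mp hq; omega]
        ring
    _ = 2 * (y ^ k / k !) := by
        simp [hC]

end Expansion

theorem sum_range_odd_eq_sub_of_sub_eq {K : Type*} [Ring K] (f g : K → K)
    (h : ∀ y, f (y + 1) - f (y - 1) = g y) (n : ℕ) :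
    ∑ j ∈ range n, g (2 * j + 1) = f (2 * n) - f 0 := by
  have htel := sum_range_sub (fun j : ℕ => f (2 * j)) n
  rw [Nat.cast_zero, mul_zero] at htel
  rw [← htel]
  refine sum_congr rfl fun j _ => ?_
  rw [← h]
  push_cast
  rw [add_sub_cancel_right, add_assoc, one_add_one_eq_two, mul_add, mul_one]

theorem oddPowerSum_eq_C_expansion (C : ℕ → ℚ) (hC0 : C 0 = 1)
    (hCrec : ∀ p : ℕ, 1 ≤ p → ∑ q ∈ Finset.range (p + 1), C (p - q) / (Nat.factorial (2 * q + 1) : ℚ) = 0) (k m : ℕ) :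
    oddPowerSum k m =
      ((Nat.factorial k : ℚ) / 2) *
        ∑ q ∈ Finset.range (k / 2 + 1),
          C q * ((2 * (m : ℚ) + 1) + 1) ^ (k + 1 - 2 * q) /
            (Nat.factorial (k + 1 - 2 * q) : ℚ) := by
  have hdiff := cExpansion_add_one_sub_cExpansion_sub_one
    (sum_range_div_factorial_eq_ite hC0 hCrec) k
  have htel := sum_range_odd_eq_sub_of_sub_eq _ _ hdiff (m + 1)
  rw [cExpansion_zero, sub_zero, ← mul_sum] at htel
  have hk : (k ! : ℚ) ≠ 0 := Nat.cast_ne_zero.mpr k.factorial_ne_zero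
  rw [← cExpansion, show 2 * (m : ℚ) + 1 + 1 = 2 * ((m + 1 : ℕ) : ℚ) by push_cast; ring, ← htel,
    oddPowerSum, mul_sum, mul_sum]
  field_simp
end

section
/- For each k ≥ 1 and L ≥ 0, the unique polynomial p over ℚ of degree L+k+1 satisfying p(N) = S_k^{(L)}(N) for all positive integers N has roots at 0, −1, −2, …, −(L+1); equivalently, p(x) is divisible by x(x+1)(x+2)⋯(x+L+1) in ℚ[x]. -/
open Finset Polynomial

/-- The hypersum: `hyperSum k 0 N = ∑_{n=1}^N n^k` and
`hyperSum k (L+1) N = ∑_{n=1}^N hyperSum k L n`. -/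
def hyperSum (k : ℕ) : ℕ → ℕ → ℚ
  | 0, N => ∑ n ∈ Finset.Icc 1 N, (n : ℚ) ^ k
  | L + 1, N => ∑ n ∈ Finset.Icc 1 N, hyperSum k L n

/-!
A polynomial `p` agreeing with `S_k^{(L)}` on large integers has backward difference
`∇p = p - p(X - 1)` agreeing with `S_k^{(L-1)}` (with `n ↦ n^k` in place of `S_k^{(-1)}`) on large
integers. By induction on `L`, `∇p` agrees with `S_k^{(L-1)}` on all of `ℕ` and vanishes at
`0, -1, …, -L`; hence `p - S_k^{(L)}` is constant on `ℕ`, so `p(0) = S_k^{(L)}(0) = 0`, and walking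
down with `p(x - 1) = p(x) - ∇p(x)` gives `p(-1) = ⋯ = p(-(L+1)) = 0`.
-/

namespace Polynomial

variable {R : Type*} [CommRing R]

noncomputable def bwdDiff (p : R[X]) : R[X] := p - p.comp (X - 1)

@[simp]
theorem eval_bwdDiff (p : R[X]) (x : R) : (bwdDiff p).eval x = p.eval x - p.eval (x - 1) := by
  simp [bwdDiff]

theorem eq_of_eval_natCast_eq_of_le [IsDomain R] [CharZero R] {p q : R[X]} (M : ℕ)
    (h : ∀ N ≥ M, p.eval (N : R) = q.eval (N : R)) : p = q := by
  refine eq_of_infinite_eval_eq p q <|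
    Set.infinite_of_injective_forall_mem (f := fun n : ℕ => ((n + M : ℕ) : R)) ?_ fun n => ?_
  · exact Nat.cast_injective.comp (add_left_injective M)
  · exact h (n + M) (Nat.le_add_left M n)

theorem eval_natCast_eq_of_bwdDiff {p : R[X]} {f : ℕ → R}
    (hdiff : ∀ n : ℕ, (bwdDiff p).eval ((n + 1 : ℕ) : R) = f (n + 1) - f n)
    {M : ℕ} (hM : p.eval (M : R) = f M) (n : ℕ) : p.eval (n : R) = f n := by
  have hconst : ∀ n : ℕ, p.eval (n : R) - f n = p.eval 0 - f 0 := by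
    intro n
    induction n with
    | zero => simp
    | succ n ih =>
      have := hdiff n
      rw [eval_bwdDiff, Nat.cast_succ, add_sub_cancel_right] at this
      rw [Nat.cast_succ, ← ih]
      linear_combination this
  linear_combination hconst n - hconst M + hM

theorem eval_neg_natCast_eq_zero_of_bwdDiff {p : R[X]} {L : ℕ} (h₀ : p.eval 0 = 0)
    (hdiff : ∀ j ≤ L, (bwdDiff p).eval (-(j : R)) = 0) :
    ∀ j ≤ L + 1, p.eval (-(j : R)) = 0 := by
  intro j hj
  induction j with
  | zero => simpa using h₀
  | succ j ih =>
    have := hdiff j (by omega)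
    rw [eval_bwdDiff, ih (by omega), ← neg_add'] at this
    push_cast
    linear_combination -this

end Polynomial

theorem hyperSum_zero_succ (k N : ℕ) :
    hyperSum k 0 (N + 1) = hyperSum k 0 N + ((N + 1 : ℕ) : ℚ) ^ k := by
  simp only [hyperSum]
  exact Finset.sum_Icc_succ_top (Nat.le_add_left 1 N) _

theorem hyperSum_succ_succ (k L N : ℕ) :
    hyperSum k (L + 1) (N + 1) = hyperSum k (L + 1) N + hyperSum k L (N + 1) := by
  simp only [hyperSum]
  exact Finset.sum_Icc_succ_top (Nat.le_add_left 1 N) _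

theorem hyperSum_eq_zero_at_zero (k L : ℕ) : hyperSum k L 0 = 0 := by
  cases L <;> simp [hyperSum]

theorem bwdDiff_eq_X_pow_of_hyperSum_zero {k M : ℕ} {p : ℚ[X]}
    (h : ∀ N ≥ M, p.eval (N : ℚ) = hyperSum k 0 N) : bwdDiff p = X ^ k := by
  refine eq_of_eval_natCast_eq_of_le (M + 1) fun N hN => ?_
  obtain ⟨n, rfl⟩ : ∃ n, N = n + 1 := ⟨N - 1, by omega⟩
  rw [eval_bwdDiff, Nat.cast_succ, add_sub_cancel_right, ← Nat.cast_succ,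
    h _ (by omega), h _ (by omega), hyperSum_zero_succ]
  simp

theorem eval_bwdDiff_eq_hyperSum {k L M : ℕ} {p : ℚ[X]}
    (h : ∀ N ≥ M, p.eval (N : ℚ) = hyperSum k (L + 1) N) :
    ∀ N ≥ M + 1, (bwdDiff p).eval (N : ℚ) = hyperSum k L N := by
  intro N hN
  obtain ⟨n, rfl⟩ : ∃ n, N = n + 1 := ⟨N - 1, by omega⟩
  rw [eval_bwdDiff, Nat.cast_succ, add_sub_cancel_right, ← Nat.cast_succ,
    h _ (by omega), h _ (by omega), hyperSum_succ_succ]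
  ring

theorem eval_eq_hyperSum_and_roots_of_eventually_eq {k : ℕ} (hk : 1 ≤ k) (L : ℕ) {p : ℚ[X]}
    {M : ℕ} (h : ∀ N ≥ M, p.eval (N : ℚ) = hyperSum k L N) :
    (∀ N : ℕ, p.eval (N : ℚ) = hyperSum k L N) ∧ ∀ j ≤ L + 1, p.eval (-(j : ℚ)) = 0 := by
  induction L generalizing p M with
  | zero =>
    have hdiff := bwdDiff_eq_X_pow_of_hyperSum_zero h
    have hall : ∀ N : ℕ, p.eval (N : ℚ) = hyperSum k 0 N :=
      eval_natCast_eq_of_bwdDiff (fun n => by simp [hdiff, hyperSum_zero_succ])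
        (h M le_rfl)
    refine ⟨hall, eval_neg_natCast_eq_zero_of_bwdDiff ?_ fun j hj => ?_⟩
    · simpa [hyperSum_eq_zero_at_zero] using hall 0
    · obtain rfl : j = 0 := by omega
      simp [hdiff, zero_pow (by omega : k ≠ 0)]
  | succ L ih =>
    obtain ⟨hdiffAll, hdiffRoots⟩ := ih (eval_bwdDiff_eq_hyperSum h)
    have hall : ∀ N : ℕ, p.eval (N : ℚ) = hyperSum k (L + 1) N :=
      eval_natCast_eq_of_bwdDiff (fun n => by rw [hdiffAll, hyperSum_succ_succ]; ring)
        (h M le_rfl)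
    refine ⟨hall, eval_neg_natCast_eq_zero_of_bwdDiff ?_ hdiffRoots⟩
    simpa [hyperSum_eq_zero_at_zero] using hall 0

theorem hyperSum_poly_roots_general (k L : ℕ) (hk : 1 ≤ k) (p : Polynomial ℚ)
    (hval : ∀ N : ℕ, 1 ≤ N → p.eval (N : ℚ) = hyperSum k L N) :
    (∀ j : ℕ, j ≤ L + 1 → p.eval (-(j : ℚ)) = 0) ∧
      (∏ j ∈ Finset.range (L + 2), (Polynomial.X + Polynomial.C (j : ℚ))) ∣ p := by
  have hroots := (eval_eq_hyperSum_and_roots_of_eventually_eq hk L hval).2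
  refine ⟨hroots, Finset.prod_dvd_of_coprime ?_ fun j hj => ?_⟩
  · have hinj : Function.Injective fun j : ℕ => -(j : ℚ) := neg_injective.comp Nat.cast_injective
    refine fun i _ j _ hij => ?_
    simpa [sub_eq_add_neg] using pairwise_coprime_X_sub_C hinj hij
  · rw [← sub_neg_eq_add, ← C_neg, dvd_iff_isRoot]
    exact hroots j (by simpa [Nat.lt_succ_iff] using hj)

theorem hyperSum_poly_roots (k L : ℕ) (hk : 1 ≤ k) (p : Polynomial ℚ)
    (hdeg : p.natDegree = L + k + 1)
    (hval : ∀ N : ℕ, 1 ≤ N → p.eval (N : ℚ) = hyperSum k L N) :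
    (∀ j : ℕ, j ≤ L + 1 → p.eval (-(j : ℚ)) = 0) ∧
      (∏ j ∈ Finset.range (L + 2), (Polynomial.X + Polynomial.C (j : ℚ))) ∣ p :=
  hyperSum_poly_roots_general k L hk p hval
end

section
/- Define coefficients C_p^{(L)} by C_p^{(0)} = C_p (where C_0 = 1 and Σ_{q=0}^p C_{p−q}/(2q+1)! = 0 for p ≥ 1) and C_p^{(L)} = Σ_{q=0}^p C_q^{(L−1)}·C_{p−q} for L ≥ 1. Then for all L ≥ 0 and p ≥ 0, Σ_{q=0}^p C_{p−q}^{(L+1)}/(2q)! = ((L+1−2p)/(L+1))·C_p^{(L)}. -/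
/-!
Work with power series in `y = x²`: put `G = ∑ C_p yᵖ`, `S(y) = sinh √y / √y` and `K(y) = cosh √y`.
The defining recursion of `C` says `G S = 1`, so `G(x²) = x / sinh x` and `G^(L+1) = ∑ C_p^{(L)} yᵖ`,
while `sinh' = cosh` becomes `K = S + 2y S'`. Differentiating `G S = 1` gives `G² K = G - 2y G'`,
hence `(L+1) G^(L+2) K = (L+1) G^(L+1) - 2y (G^(L+1))'`, and the `yᵖ` coefficient of this
identity is the claim.
-/

open Finset PowerSeries

namespace Derivation

variable {R A : Type*} [CommRing R] [CommRing A] [Algebra R A] (D : Derivation R A A)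
  {G S K t : A}

theorem sq_mul_eq_sub_of_mul_eq_one (hGS : G * S = 1) (hK : K = S + t * D S) :
    G ^ 2 * K = G - t * D G := by
  have hD : D G * S + G * D S = 0 := by
    simpa [leibniz, smul_eq_mul, add_comm, mul_comm] using congrArg D hGS
  rw [hK]
  linear_combination G * hGS + t * G * hD - t * D G * hGS

theorem pow_mul_eq_sub_of_mul_eq_one (hGS : G * S = 1) (hK : K = S + t * D S) (n : ℕ) :
    (n + 1) * (K * G ^ (n + 2)) = (n + 1) * G ^ (n + 1) - t * D (G ^ (n + 1)) := by
  rw [leibniz_pow, add_tsub_cancel_right, smul_eq_mul, nsmul_eq_mul]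
  push_cast
  linear_combination (n + 1) * G ^ n * sq_mul_eq_sub_of_mul_eq_one D hGS hK

end Derivation

namespace PowerSeries

variable {R : Type*} [CommRing R]

theorem coeff_mul_eq_sum_range (f g : R⟦X⟧) (n : ℕ) :
    coeff n (f * g) = ∑ k ∈ range (n + 1), coeff k f * coeff (n - k) g := by
  rw [coeff_mul, Nat.sum_antidiagonal_eq_sum_range_succ_mk]

theorem coeff_X_mul_derivative (f : R⟦X⟧) (n : ℕ) :
    coeff n (X * d⁄dX R f) = n * coeff n f := by
  rcases n with _ | n
  · simp
  · rw [coeff_succ_X_mul, coeff_derivative]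
    push_cast
    ring

theorem coeff_mk_pow_succ {C : ℕ → R} {CL : ℕ → ℕ → R} (hCL0 : ∀ p, CL 0 p = C p)
    (hCLrec : ∀ L p, CL (L + 1) p = ∑ q ∈ range (p + 1), CL L q * C (p - q)) (L p : ℕ) :
    coeff p (mk C ^ (L + 1)) = CL L p := by
  induction L generalizing p with
  | zero => simp [hCL0]
  | succ L ih => simp [pow_succ _ (L + 1), coeff_mul_eq_sum_range, ih, hCLrec]

end PowerSeries

noncomputable def sinhcSqrt : ℚ⟦X⟧ := mk fun q => 1 / ((2 * q + 1).factorial : ℚ)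

noncomputable def coshSqrt : ℚ⟦X⟧ := mk fun q => 1 / ((2 * q).factorial : ℚ)

theorem coshSqrt_eq : coshSqrt = sinhcSqrt + 2 * X * d⁄dX ℚ sinhcSqrt := by
  ext p
  rw [map_add, mul_assoc, ← map_ofNat C 2, coeff_C_mul, coeff_X_mul_derivative]
  simp only [coshSqrt, sinhcSqrt, coeff_mk, Nat.factorial_succ (2 * p)]
  push_cast
  field_simp
  ring

theorem mk_mul_sinhcSqrt_eq_one {C : ℕ → ℚ} (hC0 : C 0 = 1)
    (hCrec : ∀ p : ℕ, 1 ≤ p → ∑ q ∈ range (p + 1), C (p - q) / ((2 * q + 1).factorial : ℚ) = 0) :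
    mk C * sinhcSqrt = 1 := by
  ext p
  rw [mul_comm, coeff_mul_eq_sum_range, coeff_one]
  rcases Nat.eq_zero_or_pos p with rfl | hp
  · simp [sinhcSqrt, hC0]
  · rw [if_neg hp.ne', ← hCrec p hp]
    refine sum_congr rfl fun q _ => ?_
    simp [sinhcSqrt, div_eq_inv_mul]

theorem CL_recursion_y (C : ℕ → ℚ) (hC0 : C 0 = 1)
    (hCrec : ∀ p : ℕ, 1 ≤ p → ∑ q ∈ Finset.range (p + 1), C (p - q) / (Nat.factorial (2 * q + 1) : ℚ) = 0)
    (CL : ℕ → ℕ → ℚ) (hCL0 : ∀ p, CL 0 p = C p)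
    (hCLrec : ∀ L p, CL (L + 1) p = ∑ q ∈ Finset.range (p + 1), CL L q * C (p - q))
    (L p : ℕ) :
    ∑ q ∈ Finset.range (p + 1), CL (L + 1) (p - q) / (Nat.factorial (2 * q) : ℚ) =
      (((L : ℚ) + 1 - 2 * p) / ((L : ℚ) + 1)) * CL L p := by
  have key := congrArg (coeff p) <| (d⁄dX ℚ).pow_mul_eq_sub_of_mul_eq_one
    (mk_mul_sinhcSqrt_eq_one hC0 hCrec) coshSqrt_eq L
  have hL : ((L : ℚ⟦X⟧) + 1) = PowerSeries.C ((L : ℚ) + 1) := by simp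
  rw [hL, ← map_ofNat PowerSeries.C 2, map_sub, coeff_C_mul, coeff_C_mul, mul_assoc, coeff_C_mul,
    coeff_X_mul_derivative, coeff_mul_eq_sum_range, coeff_mk_pow_succ hCL0 hCLrec] at key
  simp only [coshSqrt, coeff_mk, coeff_mk_pow_succ hCL0 hCLrec (L + 1), one_div_mul_eq_div] at key
  rw [div_mul_eq_mul_div, eq_div_iff (by positivity)]
  linear_combination key
end

section
/- Define C_p = (2 − 2^{2p})·B_{2p}/(2p)! and C_p^{(1)} = Σ_{q=0}^p C_q·C_{p−q}. Then for all p ≥ 1, C_p^{(1)} = ((2p−1)/(1 − 2^{1−2p}))·C_p; equivalently Σ_{q=0}^p C_q C_{p−q} = ((2p−1)/(1−2^{1−2p}))·C_p. -/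
/-!
The generating function `∑ C_p x^{2p}` is `x / sinh x = 2B(x) - B(2x)`, where
`B(x) = x / (eˣ - 1)` is the Bernoulli generating function. With `H(x) = B(2x)` one has
`(x / sinh x)² = H - x H'`: after multiplying by `(e^{2x} - 1)²`, both sides become `4x²e^{2x}`.
On `x^{2p}` the left side gives the convolution of the `C_q`, the right side
`(1 - 2p) 2^{2p} B_{2p} / (2p)!`, which is the stated multiple of `C_p`.
-/

open Finset

/-- `C_p = (2 - 2^{2p}) B_{2p}/(2p)!`. -/
noncomputable def Cseq (p : ℕ) : ℚ :=
  (2 - 2 ^ (2 * p)) * bernoulli (2 * p) / (Nat.factorial (2 * p) : ℚ)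

namespace PowerSeries

theorem coeff_two_mul_mul_of_coeff_odd_eq_zero {R : Type*} [CommSemiring R] {f : R⟦X⟧}
    (hf : ∀ n, Odd n → coeff n f = 0) (g : R⟦X⟧) (p : ℕ) :
    coeff (2 * p) (f * g) = ∑ ij ∈ antidiagonal p, coeff (2 * ij.1) f * coeff (2 * ij.2) g := by
  rw [coeff_mul, eq_comm]
  calc ∑ ij ∈ antidiagonal p, coeff (2 * ij.1) f * coeff (2 * ij.2) g
      = ∑ ij ∈ (antidiagonal p).image fun ij ↦ (2 * ij.1, 2 * ij.2),
          coeff ij.1 f * coeff ij.2 g := by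
        rw [sum_image fun a _ b _ h ↦ by simp_all [Prod.ext_iff]]
    _ = _ := sum_subset (fun ij hij ↦ ?_) fun ij hij hnot ↦ ?_
  · obtain ⟨ij, hij, rfl⟩ := mem_image.1 hij
    simp_all
    omega
  · have hodd : Odd ij.1 := by
      by_contra heven
      obtain ⟨i, hi⟩ := Nat.not_odd_iff_even.1 heven
      refine hnot (mem_image.2 ⟨(i, p - i), ?_, ?_⟩)
      all_goals simp_all [Prod.ext_iff]; omega
    rw [hf _ hodd, zero_mul]

theorem coeff_sub_X_mul_derivative {R : Type*} [CommRing R] (f : R⟦X⟧) (n : ℕ) :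
    coeff n (f - X * d⁄dX R f) = (1 - n) * coeff n f := by
  cases n with
  | zero => simp
  | succ m => rw [map_sub, coeff_succ_X_mul, coeff_derivative]; push_cast; ring

section RatAlgebra

variable (A : Type*) [CommRing A] [Algebra ℚ A]

noncomputable def xDivSinh : A⟦X⟧ :=
  2 * bernoulliPowerSeries A - rescale 2 (bernoulliPowerSeries A)

theorem coeff_xDivSinh (n : ℕ) :
    coeff n (xDivSinh A) = algebraMap ℚ A ((2 - 2 ^ n) * bernoulli n / n.factorial) := by
  simp only [xDivSinh, bernoulliPowerSeries, map_sub, coeff_rescale, coeff_mk]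
  rw [← map_ofNat (C (R := A)) 2, coeff_C_mul, coeff_mk, mul_div_assoc, map_mul, map_sub,
    map_pow, map_ofNat, sub_mul]

theorem coeff_xDivSinh_of_odd {n : ℕ} (hn : Odd n) : coeff n (xDivSinh A) = 0 := by
  rw [coeff_xDivSinh]
  obtain rfl | hn1 := eq_or_ne n 1
  · norm_num
  · rw [bernoulli_eq_bernoulli'_of_ne_one hn1,
      bernoulli'_eq_zero_of_odd hn (lt_of_le_of_ne hn.pos hn1.symm)]
    simp

theorem rescale_two_bernoulliPowerSeries_mul_exp_sq_sub_one :
    rescale 2 (bernoulliPowerSeries A) * (exp A ^ 2 - 1) = 2 * X := by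
  have h := congrArg (rescale (2 : A)) (bernoulliPowerSeries_mul_exp_sub_one A)
  rwa [map_mul, map_sub, map_one, ← Nat.cast_ofNat, ← exp_pow_eq_rescale_exp, rescale_X,
    map_natCast] at h

theorem xDivSinh_mul_exp_sq_sub_one : xDivSinh A * (exp A ^ 2 - 1) = 2 * X * exp A := by
  rw [xDivSinh]
  linear_combination (2 * (exp A + 1)) * bernoulliPowerSeries_mul_exp_sub_one A -
    rescale_two_bernoulliPowerSeries_mul_exp_sq_sub_one A

variable [IsDomain A]

theorem exp_sq_sub_one_ne_zero : (exp A ^ 2 - 1 : A⟦X⟧) ≠ 0 := by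
  have hcoeff : coeff 1 (exp A ^ 2 - 1) = algebraMap ℚ A 2 := by
    simp [exp_pow_eq_rescale_exp, map_ofNat]
  refine fun h ↦ two_ne_zero ((algebraMap ℚ A).injective ?_)
  rw [← hcoeff, h, map_zero, map_zero]

theorem xDivSinh_sq :
    xDivSinh A ^ 2 =
      rescale 2 (bernoulliPowerSeries A) - X * d⁄dX A (rescale 2 (bernoulliPowerSeries A)) := by
  set H := rescale 2 (bernoulliPowerSeries A)
  set E := exp A
  have hH : H * (E ^ 2 - 1) = 2 * X := rescale_two_bernoulliPowerSeries_mul_exp_sq_sub_one A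
  have hH' : d⁄dX A H * (E ^ 2 - 1) + 2 * H * E ^ 2 = 2 := by
    have h := congrArg (d⁄dX A) hH
    rw [Derivation.leibniz, Derivation.leibniz, map_sub, Derivation.map_one_eq_zero,
      Derivation.leibniz_pow, derivative_exp, derivative_X, ← Nat.cast_ofNat (R := A⟦X⟧),
      Derivation.map_natCast] at h
    linear_combination h
  apply mul_right_cancel₀ (pow_ne_zero 2 (exp_sq_sub_one_ne_zero A))
  linear_combination (xDivSinh A * (E ^ 2 - 1) + 2 * X * E) * xDivSinh_mul_exp_sq_sub_one A +
    (-(E ^ 2 - 1) - 2 * X * E ^ 2) * hH + (X * (E ^ 2 - 1)) * hH'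

end RatAlgebra

end PowerSeries

theorem two_mul_sub_one_div_one_sub_two_zpow_mul (p : ℕ) :
    (2 * (p : ℚ) - 1) / (1 - (2 : ℚ) ^ (1 - 2 * (p : ℤ))) * (2 - 2 ^ (2 * p)) =
      (1 - 2 * p) * 2 ^ (2 * p) := by
  have hne : (2 : ℚ) ^ (2 * p) ≠ 2 := by
    intro h
    have := Nat.pow_right_injective le_rfl (by exact_mod_cast h : 2 ^ (2 * p) = 2 ^ 1)
    omega
  have hzpow : (2 : ℚ) ^ (1 - 2 * (p : ℤ)) = 2 / 2 ^ (2 * p) := by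
    rw [zpow_sub₀ two_ne_zero, zpow_one, ← Nat.cast_ofNat (R := ℤ), ← Nat.cast_mul,
      zpow_natCast]
  rw [hzpow, one_sub_div (by positivity)]
  field_simp [sub_ne_zero.2 hne]
  ring

open PowerSeries in
theorem C_convolution_general (p : ℕ) :
    ∑ q ∈ Finset.range (p + 1), Cseq q * Cseq (p - q) =
      ((2 * (p : ℚ) - 1) / (1 - (2 : ℚ) ^ (1 - 2 * (p : ℤ)))) * Cseq p := by
  have hCseq (q : ℕ) : Cseq q = coeff (2 * q) (xDivSinh ℚ) := by
    rw [coeff_xDivSinh, Algebra.algebraMap_self, RingHom.id_apply, Cseq]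
  have hsq := congrArg (coeff (2 * p)) (xDivSinh_sq ℚ)
  rw [sq, coeff_two_mul_mul_of_coeff_odd_eq_zero (fun _ ↦ coeff_xDivSinh_of_odd ℚ),
    coeff_sub_X_mul_derivative, coeff_rescale, bernoulliPowerSeries, coeff_mk,
    Algebra.algebraMap_self, RingHom.id_apply] at hsq
  calc ∑ q ∈ range (p + 1), Cseq q * Cseq (p - q)
      = ∑ ij ∈ antidiagonal p,
          coeff (2 * ij.1) (xDivSinh ℚ) * coeff (2 * ij.2) (xDivSinh ℚ) := by
        rw [Nat.sum_antidiagonal_eq_sum_range_succ fun i j ↦ coeff (2 * i) _ * coeff (2 * j) _]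
        simp only [hCseq]
    _ = (1 - 2 * p) * 2 ^ (2 * p) * bernoulli (2 * p) / (2 * p).factorial := by
        rw [hsq]
        push_cast
        ring
    _ = _ := by
        rw [Cseq, ← mul_div_assoc, ← mul_assoc, two_mul_sub_one_div_one_sub_two_zpow_mul]

theorem C_convolution (p : ℕ) (hp : 1 ≤ p) :
    ∑ q ∈ Finset.range (p + 1), Cseq q * Cseq (p - q) =
      ((2 * (p : ℚ) - 1) / (1 - (2 : ℚ) ^ (1 - 2 * (p : ℤ)))) * Cseq p :=
  C_convolution_general p
end
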